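/- Under conditions $h(b\cdot x)+b=b+h(x)$ and $h(y)\cdot x+y=y+x$, the multiplication map $m: A\times_B A\to A$ defined on the pullback $\{(a,a') : f(a)=\tilde h(a')\}$ by $m(a,a')=k(q(a))+a'$ is a monoid homomorphism which moreover preserves conjugation: $m(\overline{a},\overline{a'}) = \overline{m(a,a')}$. -/

import Mathlib

/-!
Every element of `A` splits as `k (q a) + r (f a)`, so products in `A` are computed through the
action `b • x = q (r b + k x)` of `B` on `X`; in particular
`q (a₁ + a₂) = q a₁ + f a₁ • q a₂`.
The two conditions on `h` combine into `k (h̃ a' • x) + a' = a' + k x`: along the pullback,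
`a'` commutes past `k` at the cost of acting by `f a = h̃ a'`, which is exactly what is needed to
move `a₁'` past `k (q a₂)` in `m (a₁ + a₂, a₁' + a₂')`. Conjugation reverses sums and
`h̃ (cA a) = cB (h̃ a)`, so the same identity handles conjugates.
-/

structure IsSchreierSplit {X A B : Type*} [AddMonoid X] [AddMonoid A] [AddMonoid B]
    (f : A →+ B) (r : B →+ A) (k : X →+ A) (q : A → X) : Prop where
  f_r : ∀ b, f (r b) = b
  f_k : ∀ x, f (k x) = 0
  eq_k_q_add_r : ∀ a, a = k (q a) + r (f a)
  q_k_add_r : ∀ x b, q (k x + r b) = x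

section

variable {X A B : Type*} [AddMonoid X] [AddMonoid A] [AddMonoid B]

def schreierAction (q : A → X) (r : B →+ A) (k : X →+ A) (b : B) (x : X) : X :=
  q (r b + k x)

def hTilde (h : X → B) (f : A →+ B) (q : A → X) (a : A) : B :=
  h (q a) + f a

def pullbackMul (k : X →+ A) (q : A → X) (a a' : A) : A :=
  k (q a) + a'

end

namespace IsSchreierSplit

variable {X A B : Type*} [AddMonoid X] [AddMonoid A] [AddMonoid B]
  {f : A →+ B} {r : B →+ A} {k : X →+ A} {q : A → X}

theorem q_eq (hS : IsSchreierSplit f r k q) {a : A} {x : X} {b : B} (h : a = k x + r b) :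
    q a = x := by
  rw [h, hS.q_k_add_r]

theorem r_add_k (hS : IsSchreierSplit f r k q) (b : B) (x : X) :
    r b + k x = k (schreierAction q r k b x) + r b := by
  have h := hS.eq_k_q_add_r (r b + k x)
  rwa [map_add, hS.f_r, hS.f_k, add_zero] at h

theorem schreierAction_add (hS : IsSchreierSplit f r k q) (b b' : B) (x : X) :
    schreierAction q r k (b + b') x = schreierAction q r k b (schreierAction q r k b' x) :=
  hS.q_eq <| by
    rw [map_add, add_assoc, hS.r_add_k b', ← add_assoc, hS.r_add_k b, add_assoc, ← map_add]

theorem q_add (hS : IsSchreierSplit f r k q) (a a' : A) :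
    q (a + a') = q a + schreierAction q r k (f a) (q a') :=
  hS.q_eq <| calc
    a + a' = k (q a) + r (f a) + (k (q a') + r (f a')) := by
      rw [← hS.eq_k_q_add_r, ← hS.eq_k_q_add_r]
    _ = k (q a) + (r (f a) + k (q a')) + r (f a') := by simp only [add_assoc]
    _ = k (q a) + (k (schreierAction q r k (f a) (q a')) + r (f a)) + r (f a') := by
      rw [hS.r_add_k]
    _ = k (q a + schreierAction q r k (f a) (q a')) + r (f (a + a')) := by
      simp only [map_add, add_assoc]

theorem q_zero (hS : IsSchreierSplit f r k q) : q 0 = 0 :=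
  hS.q_eq (b := 0) <| by simp

theorem k_schreierAction_hTilde_add (hS : IsSchreierSplit f r k q) {h : X → B}
    (hC2 : ∀ x y, schreierAction q r k (h y) x + y = y + x) (a : A) (x : X) :
    k (schreierAction q r k (hTilde h f q a) x) + a = a + k x := calc
  k (schreierAction q r k (h (q a) + f a) x) + a
      = k (schreierAction q r k (h (q a)) (schreierAction q r k (f a) x)) +
          (k (q a) + r (f a)) := by
    rw [hS.schreierAction_add, ← hS.eq_k_q_add_r]
  _ = k (schreierAction q r k (h (q a)) (schreierAction q r k (f a) x) + q a) + r (f a) := by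
    rw [map_add, add_assoc]
  _ = k (q a) + (r (f a) + k x) := by
    rw [hC2, map_add, add_assoc, ← hS.r_add_k]
  _ = a + k x := by
    rw [← add_assoc, ← hS.eq_k_q_add_r]

theorem pullbackMul_add (hS : IsSchreierSplit f r k q) {h : X → B}
    (hC2 : ∀ x y, schreierAction q r k (h y) x + y = y + x)
    {a₁ a₁' : A} (h₁ : f a₁ = hTilde h f q a₁') (a₂ a₂' : A) :
    pullbackMul k q (a₁ + a₂) (a₁' + a₂') =
      pullbackMul k q a₁ a₁' + pullbackMul k q a₂ a₂' := calc
  k (q (a₁ + a₂)) + (a₁' + a₂')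
      = k (q a₁) + (k (schreierAction q r k (hTilde h f q a₁') (q a₂)) + a₁') + a₂' := by
    rw [hS.q_add, h₁, map_add]
    simp only [add_assoc]
  _ = k (q a₁) + a₁' + (k (q a₂) + a₂') := by
    rw [hS.k_schreierAction_hTilde_add hC2]
    simp only [add_assoc]

theorem pullbackMul_zero (hS : IsSchreierSplit f r k q) : pullbackMul k q 0 0 = 0 := by
  simp [pullbackMul, hS.q_zero]

section Conjugation

variable {cX : X → X} {cA : A → A} {cB : B → B}

theorem q_conj (hS : IsSchreierSplit f r k q) (hA : ∀ a a', cA (a + a') = cA a' + cA a)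
    (hr : ∀ b, r (cB b) = cA (r b)) (hk : ∀ x, k (cX x) = cA (k x)) (a : A) :
    q (cA a) = schreierAction q r k (cB (f a)) (cX (q a)) :=
  congrArg q <| by rw [hr, hk, ← hA, ← hS.eq_k_q_add_r]

theorem hTilde_conj (hS : IsSchreierSplit f r k q) {h : X → B}
    (hA : ∀ a a', cA (a + a') = cA a' + cA a) (hB : ∀ b b', cB (b + b') = cB b' + cB b)
    (hf : ∀ a, f (cA a) = cB (f a)) (hr : ∀ b, r (cB b) = cA (r b))
    (hk : ∀ x, k (cX x) = cA (k x)) (hh : ∀ x, h (cX x) = cB (h x))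
    (hC1 : ∀ b x, h (schreierAction q r k b x) + b = b + h x) (a : A) :
    hTilde h f q (cA a) = cB (hTilde h f q a) := by
  rw [hTilde, hTilde, hS.q_conj hA hr hk, hf, hC1, hB, hh]

theorem pullbackMul_conj (hS : IsSchreierSplit f r k q) {h : X → B}
    (hA : ∀ a a', cA (a + a') = cA a' + cA a) (hB : ∀ b b', cB (b + b') = cB b' + cB b)
    (hf : ∀ a, f (cA a) = cB (f a)) (hr : ∀ b, r (cB b) = cA (r b))
    (hk : ∀ x, k (cX x) = cA (k x)) (hh : ∀ x, h (cX x) = cB (h x))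
    (hC1 : ∀ b x, h (schreierAction q r k b x) + b = b + h x)
    (hC2 : ∀ x y, schreierAction q r k (h y) x + y = y + x)
    {a a' : A} (ha : f a = hTilde h f q a') :
    pullbackMul k q (cA a) (cA a') = cA (pullbackMul k q a a') := calc
  k (q (cA a)) + cA a' = k (schreierAction q r k (hTilde h f q (cA a')) (cX (q a))) + cA a' := by
    rw [hS.q_conj hA hr hk, ha, hS.hTilde_conj hA hB hf hr hk hh hC1]
  _ = cA a' + k (cX (q a)) := hS.k_schreierAction_hTilde_add hC2 _ _
  _ = cA (k (q a) + a') := by rw [hk, hA]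

end Conjugation

end IsSchreierSplit

theorem multiplication_is_morphism_general
    {X A B : Type*} [AddCancelMonoid X] [AddCancelMonoid A] [AddCancelMonoid B]
    (cX : X → X) (cA : A → A) (cB : B → B)
    (hA3 : ∀ a a' : A, cA (a + a') = cA a' + cA a)
    (hB3 : ∀ b b' : B, cB (b + b') = cB b' + cB b)
    (f : A → B) (r : B → A) (k : X → A) (q : A → X)
    (hfadd : ∀ a a' : A, f (a + a') = f a + f a') (hf0 : f 0 = 0)
    (hfc : ∀ a : A, f (cA a) = cB (f a))
    (hradd : ∀ b b' : B, r (b + b') = r b + r b') (hr0 : r 0 = 0)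
    (hrc : ∀ b : B, r (cB b) = cA (r b))
    (hkadd : ∀ x x' : X, k (x + x') = k x + k x') (hk0 : k 0 = 0)
    (hkc : ∀ x : X, k (cX x) = cA (k x))
    (hfr : ∀ b : B, f (r b) = b)
    (hker : ∀ x : X, f (k x) = 0)
    (hq1 : ∀ a : A, a = k (q a) + r (f a))
    (hq2 : ∀ (x : X) (b : B), x = q (k x + r b))
    (h : X → B)
    (hhc : ∀ x : X, h (cX x) = cB (h x))
    (hC1 : ∀ (b : B) (x : X), h (q (r b + k x)) + b = b + h x)
    (hC2 : ∀ x y : X, q (r (h y) + k x) + y = y + x) :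
    (∀ a1 a1' a2 a2' : A,
        f a1 = h (q a1') + f a1' → f a2 = h (q a2') + f a2' →
        k (q (a1 + a2)) + (a1' + a2') = (k (q a1) + a1') + (k (q a2) + a2')) ∧
    (k (q (0 : A)) + (0 : A) = 0) ∧
    (∀ a a' : A, f a = h (q a') + f a' →
        k (q (cA a)) + cA a' = cA (k (q a) + a')) := by
  let f' : A →+ B := ⟨⟨f, hf0⟩, hfadd⟩
  let r' : B →+ A := ⟨⟨r, hr0⟩, hradd⟩
  let k' : X →+ A := ⟨⟨k, hk0⟩, hkadd⟩
  have hS : IsSchreierSplit f' r' k' q :=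
    ⟨hfr, hker, hq1, fun x b => (hq2 x b).symm⟩
  exact ⟨fun _ _ a2 a2' h1 _ => hS.pullbackMul_add hC2 h1 a2 a2',
    hS.pullbackMul_zero,
    fun _ _ ha => hS.pullbackMul_conj hA3 hB3 hfc hrc hkc hhc hC1 hC2 ha⟩

theorem multiplication_is_morphism
    {X A B : Type*} [AddCancelMonoid X] [AddCancelMonoid A] [AddCancelMonoid B]
    (cX : X → X) (cA : A → A) (cB : B → B)
    (hX1 : ∀ x : X, cX x + x = x + cX x)
    (hX2 : ∀ x y : X, x + cX y + y = y + cX y + x)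
    (hX3 : ∀ x y : X, cX (x + y) = cX y + cX x)
    (hA1 : ∀ a : A, cA a + a = a + cA a)
    (hA2 : ∀ a a' : A, a + cA a' + a' = a' + cA a' + a)
    (hA3 : ∀ a a' : A, cA (a + a') = cA a' + cA a)
    (hB1 : ∀ b : B, cB b + b = b + cB b)
    (hB2 : ∀ b b' : B, b + cB b' + b' = b' + cB b' + b)
    (hB3 : ∀ b b' : B, cB (b + b') = cB b' + cB b)
    (f : A → B) (r : B → A) (k : X → A) (q : A → X)
    (hfadd : ∀ a a' : A, f (a + a') = f a + f a') (hf0 : f 0 = 0)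
    (hfc : ∀ a : A, f (cA a) = cB (f a))
    (hradd : ∀ b b' : B, r (b + b') = r b + r b') (hr0 : r 0 = 0)
    (hrc : ∀ b : B, r (cB b) = cA (r b))
    (hkadd : ∀ x x' : X, k (x + x') = k x + k x') (hk0 : k 0 = 0)
    (hkc : ∀ x : X, k (cX x) = cA (k x))
    (hfr : ∀ b : B, f (r b) = b)
    (hkinj : Function.Injective k)
    (hker : ∀ x : X, f (k x) = 0)
    (hker' : ∀ a : A, f a = 0 → ∃ x : X, k x = a)
    (hq1 : ∀ a : A, a = k (q a) + r (f a))
    (hq2 : ∀ (x : X) (b : B), x = q (k x + r b))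
    (h : X → B)
    (hhadd : ∀ x x' : X, h (x + x') = h x + h x') (hh0 : h 0 = 0)
    (hhc : ∀ x : X, h (cX x) = cB (h x))
    (hC1 : ∀ (b : B) (x : X), h (q (r b + k x)) + b = b + h x)
    (hC2 : ∀ x y : X, q (r (h y) + k x) + y = y + x) :
    (∀ a1 a1' a2 a2' : A,
        f a1 = h (q a1') + f a1' → f a2 = h (q a2') + f a2' →
        k (q (a1 + a2)) + (a1' + a2') = (k (q a1) + a1') + (k (q a2) + a2')) ∧
    (k (q (0 : A)) + (0 : A) = 0) ∧
    (∀ a a' : A, f a = h (q a') + f a' →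
        k (q (cA a)) + cA a' = cA (k (q a) + a')) :=
  multiplication_is_morphism_general cX cA cB hA3 hB3 f r k q hfadd hf0 hfc hradd hr0 hrc hkadd hk0
    hkc hfr hker hq1 hq2 h hhc hC1 hC2
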